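/- arXiv:1801.02771 — 9 statements merged into one kernel-verified Lean document; each statement's English description precedes it below -/
import Mathlib

section
/- For every real number φ, applying the oracle call followed by the inversion about the mean rotates the state by 2θ in the plane spanned by ã and t: U_S (U_A (sin(φ) • ã + cos(φ) • t)) = sin(φ + 2θ) • ã + cos(φ + 2θ) • t. -/
/-!
The states `sin α • ã + cos α • t` form the unit circle of the real plane spanned by the
orthonormal vectors `ã` and `t`, and `s` is the point at angle `θ` on it. The oracle `U_A`
fixes `t` and negates `ã`, so it maps angle `α` to `-α`; the inversion `U_S` is the reflection in
the line through `s`, mapping angle `α` to `2θ - α`. The composite maps `φ` to `φ + 2θ`.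
-/

open Finset

section Rotation

variable {𝕜 E : Type*} [RCLike 𝕜] [NormedAddCommGroup E] [InnerProductSpace 𝕜 E]

local notation "⟪" x ", " y "⟫" => inner 𝕜 x y

variable (𝕜) in
noncomputable def unitCirclePoint (a t : E) (α : ℝ) : E :=
  (Real.sin α : 𝕜) • a + (Real.cos α : 𝕜) • t

variable {a t : E}

theorem map_unitCirclePoint_of_eq_neg {f : E →ₗ[𝕜] E} (ha : f a = -a) (ht : f t = t) (α : ℝ) :
    f (unitCirclePoint 𝕜 a t α) = unitCirclePoint 𝕜 a t (-α) := by
  simp only [unitCirclePoint, map_add, map_smul, ha, ht, Real.sin_neg, Real.cos_neg]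
  push_cast
  module

theorem inner_unitCirclePoint (ha : ⟪a, a⟫ = 1) (ht : ⟪t, t⟫ = 1) (hat : ⟪a, t⟫ = 0)
    (α β : ℝ) :
    ⟪unitCirclePoint 𝕜 a t α, unitCirclePoint 𝕜 a t β⟫ = (Real.cos (β - α) : 𝕜) := by
  have hta : ⟪t, a⟫ = 0 := by rw [← inner_conj_symm, hat, map_zero]
  simp only [unitCirclePoint, inner_add_left, inner_add_right, inner_smul_left,
    inner_smul_right, ha, ht, hat, hta, RCLike.conj_ofReal, Real.cos_sub]
  push_cast
  ring

theorem reflection_unitCirclePoint (ha : ⟪a, a⟫ = 1) (ht : ⟪t, t⟫ = 1) (hat : ⟪a, t⟫ = 0)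
    (θ α : ℝ) :
    (2 * ⟪unitCirclePoint 𝕜 a t θ, unitCirclePoint 𝕜 a t α⟫) • unitCirclePoint 𝕜 a t θ
        - unitCirclePoint 𝕜 a t α = unitCirclePoint 𝕜 a t (2 * θ - α) := by
  have hsin : Real.sin (2 * θ - α) = 2 * Real.cos (α - θ) * Real.sin θ - Real.sin α := by
    rw [show 2 * θ - α = θ - (α - θ) by ring, Real.sin_sub, show α = (α - θ) + θ by ring,
      Real.sin_add]
    ring_nf
  have hcos : Real.cos (2 * θ - α) = 2 * Real.cos (α - θ) * Real.cos θ - Real.cos α := by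
    rw [show 2 * θ - α = θ - (α - θ) by ring, Real.cos_sub, show α = (α - θ) + θ by ring,
      Real.cos_add]
    ring_nf
  rw [inner_unitCirclePoint ha ht hat]
  simp only [unitCirclePoint, hsin, hcos]
  push_cast
  module

end Rotation

section UniformSuperposition

variable {𝕜 ι : Type*} [RCLike 𝕜] [DecidableEq ι]

variable (𝕜) in
noncomputable def uniformSuperposition (B : Finset ι) : EuclideanSpace 𝕜 ι :=
  (√(#B : ℝ) : 𝕜)⁻¹ • ∑ i ∈ B, EuclideanSpace.single i (1 : 𝕜)

theorem map_uniformSuperposition_of_forall {f : EuclideanSpace 𝕜 ι →ₗ[𝕜] EuclideanSpace 𝕜 ι}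
    {B : Finset ι} {c : 𝕜}
    (hf : ∀ i ∈ B, f (EuclideanSpace.single i 1) = c • EuclideanSpace.single i 1) :
    f (uniformSuperposition 𝕜 B) = c • uniformSuperposition 𝕜 B := by
  simp only [uniformSuperposition, map_smul, map_sum, sum_congr rfl hf, ← smul_sum, smul_comm c]

theorem uniformSuperposition_union {B C : Finset ι} (h : Disjoint B C) :
    uniformSuperposition 𝕜 (B ∪ C) =
      (√(#B / #(B ∪ C) : ℝ) : 𝕜) • uniformSuperposition 𝕜 B
        + (√(#C / #(B ∪ C) : ℝ) : 𝕜) • uniformSuperposition 𝕜 C := by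
  have rescale (D : Finset ι) :
      (√(#(B ∪ C) : ℝ) : 𝕜)⁻¹ • ∑ i ∈ D, EuclideanSpace.single i (1 : 𝕜) =
        (√(#D / #(B ∪ C) : ℝ) : 𝕜) • uniformSuperposition 𝕜 D := by
    rcases D.eq_empty_or_nonempty with rfl | hD
    · simp [uniformSuperposition]
    have hD' : (√(#D : ℝ) : 𝕜) ≠ 0 := RCLike.ofReal_ne_zero.mpr (by positivity)
    rw [uniformSuperposition, smul_smul, Real.sqrt_div (Nat.cast_nonneg _)]
    congr 1
    push_cast
    field_simp
  rw [← rescale, ← rescale, ← smul_add, ← sum_union h, uniformSuperposition]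

variable [Fintype ι]

local notation "⟪" x ", " y "⟫" => inner 𝕜 x y

theorem inner_sum_single_one (B C : Finset ι) :
    ⟪∑ i ∈ B, EuclideanSpace.single i (1 : 𝕜), ∑ j ∈ C, EuclideanSpace.single j (1 : 𝕜)⟫
      = (#(B ∩ C) : 𝕜) := by
  simp [sum_inner, inner_sum, EuclideanSpace.inner_single_left, sum_ite_eq', sum_ite_mem,
    inter_comm]

theorem inner_uniformSuperposition (B C : Finset ι) :
    ⟪uniformSuperposition 𝕜 B, uniformSuperposition 𝕜 C⟫
      = (#(B ∩ C) / (√(#B : ℝ) * √(#C : ℝ)) : ℝ) := by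
  simp only [uniformSuperposition, inner_smul_left, inner_smul_right, inner_sum_single_one]
  push_cast
  simp only [RCLike.conj_ofReal, map_inv₀]
  ring

theorem inner_uniformSuperposition_self {B : Finset ι} (hB : B.Nonempty) :
    ⟪uniformSuperposition 𝕜 B, uniformSuperposition 𝕜 B⟫ = 1 := by
  rw [inner_uniformSuperposition, inter_self, Real.mul_self_sqrt (Nat.cast_nonneg _),
    div_self (by exact_mod_cast hB.card_pos.ne'), RCLike.ofReal_one]

theorem inner_uniformSuperposition_of_disjoint {B C : Finset ι} (h : Disjoint B C) :
    ⟪uniformSuperposition 𝕜 B, uniformSuperposition 𝕜 C⟫ = 0 := by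
  rw [inner_uniformSuperposition, disjoint_iff_inter_eq_empty.mp h]
  simp

theorem uniformSuperposition_univ_eq_unitCirclePoint [Nonempty ι] {A : Finset ι} {θ : ℝ}
    (hθ0 : 0 ≤ θ) (hθ1 : θ ≤ Real.pi / 2) (hsin : Real.sin θ = √(#A / Fintype.card ι : ℝ)) :
    uniformSuperposition 𝕜 (univ : Finset ι) =
      unitCirclePoint 𝕜 (uniformSuperposition 𝕜 A) (uniformSuperposition 𝕜 Aᶜ) θ := by
  have hcos : Real.cos θ = √(#Aᶜ / Fintype.card ι : ℝ) := by
    rw [Real.cos_eq_sqrt_one_sub_sin_sq (by linarith [Real.pi_pos]) hθ1, hsin,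
      Real.sq_sqrt (by positivity), one_sub_div (by positivity), card_compl,
      Nat.cast_sub (card_le_univ A)]
  have hunion := uniformSuperposition_union (𝕜 := 𝕜) (disjoint_compl_right (a := A))
  rw [union_compl] at hunion
  rw [unitCirclePoint, hsin, hcos, ← card_univ, hunion]

end UniformSuperposition

theorem grover_rotation_step_general
    (n : ℕ) (A : Finset (Fin n)) (k : ℕ) (hk : k = A.card)
    (hk0 : 0 < k) (hkn : k < n)
    (θ : ℝ) (hθ0 : 0 < θ) (hθ1 : θ < Real.pi / 2)
    (hsinθ : Real.sin θ = Real.sqrt ((k : ℝ) / (n : ℝ)))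
    (s a t : EuclideanSpace ℂ (Fin n))
    (hs : s = ((Real.sqrt (n : ℝ) : ℝ) : ℂ)⁻¹ •
      ∑ i : Fin n, EuclideanSpace.single i (1 : ℂ))
    (ha : a = ((Real.sqrt (k : ℝ) : ℝ) : ℂ)⁻¹ •
      ∑ i ∈ A, EuclideanSpace.single i (1 : ℂ))
    (ht : t = ((Real.sqrt ((n : ℝ) - (k : ℝ)) : ℝ) : ℂ)⁻¹ •
      ∑ i ∈ Aᶜ, EuclideanSpace.single i (1 : ℂ))
    (UA US : Module.End ℂ (EuclideanSpace ℂ (Fin n)))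
    (hUA : ∀ i : Fin n, UA (EuclideanSpace.single i (1 : ℂ)) =
      if i ∈ A then -(EuclideanSpace.single i (1 : ℂ)) else EuclideanSpace.single i (1 : ℂ))
    (hUS : ∀ v : EuclideanSpace ℂ (Fin n), US v = (2 * (inner ℂ s v : ℂ)) • s - v) :
    ∀ φ : ℝ,
      US (UA (((Real.sin φ : ℝ) : ℂ) • a + ((Real.cos φ : ℝ) : ℂ) • t)) =
        ((Real.sin (φ + 2 * θ) : ℝ) : ℂ) • a + ((Real.cos (φ + 2 * θ) : ℝ) : ℂ) • t := by
  intro φ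
  subst hk
  have : Nonempty (Fin n) := ⟨⟨0, by omega⟩⟩
  have hcard : (n : ℝ) - #A = #Aᶜ := by
    rw [card_compl, Fintype.card_fin, Nat.cast_sub hkn.le]
  replace ha : a = uniformSuperposition ℂ A := ha
  replace ht : t = uniformSuperposition ℂ Aᶜ := by rw [ht, hcard]; rfl
  replace hs : s = unitCirclePoint ℂ a t θ := by
    rw [ha, ht, ← uniformSuperposition_univ_eq_unitCirclePoint hθ0.le hθ1.le
      (by rwa [Fintype.card_fin]), hs, uniformSuperposition, card_univ, Fintype.card_fin]
    rfl
  have hUAa : UA a = -a := by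
    rw [ha, map_uniformSuperposition_of_forall (c := -1) fun i hi ↦ by simp [hUA, hi],
      neg_one_smul]
  have hUAt : UA t = t := by
    rw [ht, map_uniformSuperposition_of_forall (c := 1) fun i hi ↦ by
      simp [hUA, mem_compl.mp hi], one_smul]
  have haa : inner ℂ a a = 1 := ha ▸ inner_uniformSuperposition_self (card_pos.mp hk0)
  have hAc : Aᶜ.Nonempty := card_pos.mp (by rw [card_compl, Fintype.card_fin]; omega)
  have htt : inner ℂ t t = 1 := ht ▸ inner_uniformSuperposition_self hAc
  have hat : inner ℂ a t = 0 :=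
    ha ▸ ht ▸ inner_uniformSuperposition_of_disjoint disjoint_compl_right
  rw [show φ + 2 * θ = 2 * θ - -φ by ring]
  change US (UA (unitCirclePoint ℂ a t φ)) = unitCirclePoint ℂ a t (2 * θ - -φ)
  rw [map_unitCirclePoint_of_eq_neg hUAa hUAt, hUS, hs, reflection_unitCirclePoint haa htt hat]

/-- Grover rotation step: applying the oracle call `UA` followed by the inversion about
the mean `US` rotates the state by `2θ` in the plane spanned by `a` (the uniform
superposition over marked indices) and `t` (the uniform superposition over unmarked
indices). -/
theorem grover_rotation_step
    (n : ℕ) (hn : 1 ≤ n) (A : Finset (Fin n)) (k : ℕ) (hk : k = A.card)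
    (hk0 : 0 < k) (hkn : k < n)
    (θ : ℝ) (hθ0 : 0 < θ) (hθ1 : θ < Real.pi / 2)
    (hsinθ : Real.sin θ = Real.sqrt ((k : ℝ) / (n : ℝ)))
    (s a t : EuclideanSpace ℂ (Fin n))
    (hs : s = ((Real.sqrt (n : ℝ) : ℝ) : ℂ)⁻¹ •
      ∑ i : Fin n, EuclideanSpace.single i (1 : ℂ))
    (ha : a = ((Real.sqrt (k : ℝ) : ℝ) : ℂ)⁻¹ •
      ∑ i ∈ A, EuclideanSpace.single i (1 : ℂ))
    (ht : t = ((Real.sqrt ((n : ℝ) - (k : ℝ)) : ℝ) : ℂ)⁻¹ •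
      ∑ i ∈ Aᶜ, EuclideanSpace.single i (1 : ℂ))
    (UA US : Module.End ℂ (EuclideanSpace ℂ (Fin n)))
    (hUA : ∀ i : Fin n, UA (EuclideanSpace.single i (1 : ℂ)) =
      if i ∈ A then -(EuclideanSpace.single i (1 : ℂ)) else EuclideanSpace.single i (1 : ℂ))
    (hUS : ∀ v : EuclideanSpace ℂ (Fin n), US v = (2 * (inner ℂ s v : ℂ)) • s - v) :
    ∀ φ : ℝ,
      US (UA (((Real.sin φ : ℝ) : ℂ) • a + ((Real.cos φ : ℝ) : ℂ) • t)) =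
        ((Real.sin (φ + 2 * θ) : ℝ) : ℂ) • a + ((Real.cos (φ + 2 * θ) : ℝ) : ℂ) • t :=
  grover_rotation_step_general n A k hk hk0 hkn θ hθ0 hθ1 hsinθ s a t hs ha ht UA US hUA hUS
end

section
/- For every natural number l, the state after l Grover iterations starting from the uniform superposition is (U_S ∘ U_A)^l s = sin((2l+1)θ) • ã + cos((2l+1)θ) • t. -/
/-!
On the real plane spanned by the orthonormal vectors `ã` and `t`, the oracle `U_A` is the
reflection in the `t`-axis and `U_S` the reflection in the line through
`s = sin θ • ã + cos θ • t`. Their product is therefore the rotation by `2θ`, so `l` iterations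
carry `s`, at angle `θ`, to the vector at angle `(2l+1)θ`.
-/

open scoped InnerProductSpace
open Finset Real

section Rotation

variable {𝕜 E : Type*} [RCLike 𝕜] [NormedAddCommGroup E] [InnerProductSpace 𝕜 E]
  {s a t : E} {θ : ℝ} {UA US : Module.End 𝕜 E}

theorem groverStep_apply_sin_smul_add_cos_smul
    (hs : s = (sin θ : 𝕜) • a + (cos θ : 𝕜) • t)
    (hsa : ⟪s, a⟫_𝕜 = sin θ) (hst : ⟪s, t⟫_𝕜 = cos θ)
    (hUAa : UA a = -a) (hUAt : UA t = t)
    (hUS : ∀ v, US v = (2 * ⟪s, v⟫_𝕜) • s - v) (φ : ℝ) :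
    (US * UA) ((sin φ : 𝕜) • a + (cos φ : 𝕜) • t) =
      (sin (φ + 2 * θ) : 𝕜) • a + (cos (φ + 2 * θ) : 𝕜) • t := by
  have hUA : UA ((sin φ : 𝕜) • a + (cos φ : 𝕜) • t) = -(sin φ : 𝕜) • a + (cos φ : 𝕜) • t := by
    rw [map_add, map_smul, map_smul, hUAa, hUAt, smul_neg, neg_smul]
  have hinner : ⟪s, -(sin φ : 𝕜) • a + (cos φ : 𝕜) • t⟫_𝕜 = (cos (φ + θ) : 𝕜) := by
    rw [inner_add_right, inner_smul_right, inner_smul_right, hsa, hst, cos_add]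
    push_cast
    ring
  have hsin : sin (φ + 2 * θ) = 2 * cos (φ + θ) * sin θ + sin φ := by
    rw [← sub_eq_iff_eq_add, sin_sub_sin]
    ring_nf
  have hcos : cos (φ + 2 * θ) = 2 * cos (φ + θ) * cos θ - cos φ := by
    rw [eq_sub_iff_add_eq, cos_add_cos]
    ring_nf
  rw [Module.End.mul_apply, hUA, hUS, hinner, hsin, hcos, hs]
  push_cast
  module

theorem groverStep_pow_apply
    (hs : s = (sin θ : 𝕜) • a + (cos θ : 𝕜) • t)
    (hsa : ⟪s, a⟫_𝕜 = sin θ) (hst : ⟪s, t⟫_𝕜 = cos θ)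
    (hUAa : UA a = -a) (hUAt : UA t = t)
    (hUS : ∀ v, US v = (2 * ⟪s, v⟫_𝕜) • s - v) (l : ℕ) :
    ((US * UA) ^ l) s =
      (sin ((2 * l + 1) * θ) : 𝕜) • a + (cos ((2 * l + 1) * θ) : 𝕜) • t := by
  induction l with
  | zero => simpa using hs
  | succ l ih =>
    rw [pow_succ', Module.End.mul_apply, ih,
      groverStep_apply_sin_smul_add_cos_smul hs hsa hst hUAa hUAt hUS]
    push_cast
    ring_nf

end Rotation

section Indicator

variable {𝕜 ι : Type*} [RCLike 𝕜] [DecidableEq ι]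

/-- Not a unit vector when `B = ∅`: it is then `0`. -/
noncomputable def normalizedIndicator (B : Finset ι) : EuclideanSpace 𝕜 ι :=
  ((√(#B : ℝ) : ℝ) : 𝕜)⁻¹ • ∑ i ∈ B, EuclideanSpace.single i 1

theorem sqrt_card_smul_normalizedIndicator (B : Finset ι) :
    ((√(#B : ℝ) : ℝ) : 𝕜) • normalizedIndicator B = ∑ i ∈ B, EuclideanSpace.single i (1 : 𝕜) := by
  rcases B.eq_empty_or_nonempty with rfl | hB
  · simp [normalizedIndicator]
  · have : ((√(#B : ℝ) : ℝ) : 𝕜) ≠ 0 := by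
      exact_mod_cast (Real.sqrt_pos.mpr (by exact_mod_cast hB.card_pos)).ne'
    rw [normalizedIndicator, smul_smul, mul_inv_cancel₀ this, one_smul]

variable [Fintype ι]

theorem inner_sum_single_sum_single (B C : Finset ι) :
    ⟪∑ i ∈ B, EuclideanSpace.single i (1 : 𝕜), ∑ j ∈ C, EuclideanSpace.single j (1 : 𝕜)⟫_𝕜 =
      #(B ∩ C) := by
  simp only [sum_inner, EuclideanSpace.inner_single_left, WithLp.ofLp_sum, Finset.sum_apply,
    PiLp.single_apply]
  simp [Finset.sum_ite_mem]

theorem inner_normalizedIndicator_of_subset {B C : Finset ι} (h : B ⊆ C) :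
    ⟪(normalizedIndicator C : EuclideanSpace 𝕜 ι), normalizedIndicator B⟫_𝕜 =
      ((√(#B : ℝ) / √(#C : ℝ) : ℝ) : 𝕜) := by
  rw [normalizedIndicator, normalizedIndicator, inner_smul_left, inner_smul_right,
    inner_sum_single_sum_single, inter_eq_right.mpr h]
  have hB : ((#B : ℕ) : 𝕜) = ((√(#B : ℝ) : ℝ) : 𝕜) * ((√(#B : ℝ) : ℝ) : 𝕜) := by
    rw [← RCLike.ofReal_mul, Real.mul_self_sqrt (Nat.cast_nonneg _), RCLike.ofReal_natCast]
  rw [map_inv₀, RCLike.conj_ofReal, hB, ← mul_assoc ((√(#B : ℝ) : ℝ) : 𝕜)⁻¹, inv_mul_mul_self, RCLike.ofReal_div,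
    div_eq_inv_mul]

theorem normalizedIndicator_univ_eq (B : Finset ι) :
    (normalizedIndicator univ : EuclideanSpace 𝕜 ι) =
      ((√(#B : ℝ) / √(#(univ : Finset ι) : ℝ) : ℝ) : 𝕜) • normalizedIndicator B +
        ((√(#Bᶜ : ℝ) / √(#(univ : Finset ι) : ℝ) : ℝ) : 𝕜) • normalizedIndicator Bᶜ := by
  rw [normalizedIndicator, ← sum_add_sum_compl B, ← sqrt_card_smul_normalizedIndicator B,
    ← sqrt_card_smul_normalizedIndicator Bᶜ, smul_add, smul_smul, smul_smul]
  push_cast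
  congr 2 <;> ring

end Indicator

theorem grover_iterations_general
    (n : ℕ) (A : Finset (Fin n)) (k : ℕ) (hk : k = A.card)
    (hkn : k < n)
    (θ : ℝ) (hθ0 : 0 < θ) (hθ1 : θ < Real.pi / 2)
    (hsinθ : Real.sin θ = Real.sqrt ((k : ℝ) / (n : ℝ)))
    (s a t : EuclideanSpace ℂ (Fin n))
    (hs : s = ((Real.sqrt (n : ℝ) : ℝ) : ℂ)⁻¹ •
      ∑ i : Fin n, EuclideanSpace.single i (1 : ℂ))
    (ha : a = ((Real.sqrt (k : ℝ) : ℝ) : ℂ)⁻¹ •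
      ∑ i ∈ A, EuclideanSpace.single i (1 : ℂ))
    (ht : t = ((Real.sqrt ((n : ℝ) - (k : ℝ)) : ℝ) : ℂ)⁻¹ •
      ∑ i ∈ Aᶜ, EuclideanSpace.single i (1 : ℂ))
    (UA US : Module.End ℂ (EuclideanSpace ℂ (Fin n)))
    (hUA : ∀ i : Fin n, UA (EuclideanSpace.single i (1 : ℂ)) =
      if i ∈ A then -(EuclideanSpace.single i (1 : ℂ)) else EuclideanSpace.single i (1 : ℂ))
    (hUS : ∀ v : EuclideanSpace ℂ (Fin n), US v = (2 * (inner ℂ s v : ℂ)) • s - v) :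
    ∀ l : ℕ,
      ((US * UA) ^ l) s =
        ((Real.sin ((2 * (l : ℝ) + 1) * θ) : ℝ) : ℂ) • a +
          ((Real.cos ((2 * (l : ℝ) + 1) * θ) : ℝ) : ℂ) • t := by
  subst hk
  have hcard_univ : (#(univ : Finset (Fin n)) : ℝ) = n := by simp
  have hcard_compl : (#Aᶜ : ℝ) = n - #A := by
    rw [card_compl, Fintype.card_fin, Nat.cast_sub hkn.le]
  replace hs : s = normalizedIndicator univ := by rw [hs, normalizedIndicator, hcard_univ]; rfl
  replace ha : a = normalizedIndicator A := ha
  replace ht : t = normalizedIndicator Aᶜ := by rw [ht, normalizedIndicator, hcard_compl]; rfl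
  have hsin : sin θ = √(#A : ℝ) / √(#(univ : Finset (Fin n)) : ℝ) := by
    rw [hsinθ, hcard_univ, Real.sqrt_div (Nat.cast_nonneg _)]
  have hcos : cos θ = √(#Aᶜ : ℝ) / √(#(univ : Finset (Fin n)) : ℝ) := by
    have hn : (0 : ℝ) < n := by exact_mod_cast (Nat.zero_le _).trans_lt hkn
    rw [cos_eq_sqrt_one_sub_sin_sq (by linarith [pi_pos]) hθ1.le, hsinθ,
      Real.sq_sqrt (by positivity), hcard_compl, hcard_univ, ← Real.sqrt_div (by linarith),
      sub_div, div_self hn.ne']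
  intro l
  refine groverStep_pow_apply ?_ ?_ ?_ ?_ ?_ hUS l
  · rw [hs, ha, ht, hsin, hcos]
    exact normalizedIndicator_univ_eq A
  · rw [hs, ha, hsin]
    exact inner_normalizedIndicator_of_subset (subset_univ A)
  · rw [hs, ht, hcos]
    exact inner_normalizedIndicator_of_subset (subset_univ Aᶜ)
  · rw [ha, normalizedIndicator, map_smul, map_sum, ← smul_neg, ← sum_neg_distrib]
    exact congrArg _ (sum_congr rfl fun i hi => by rw [hUA, if_pos hi])
  · rw [ht, normalizedIndicator, map_smul, map_sum]
    exact congrArg _ (sum_congr rfl fun i hi => by rw [hUA, if_neg (mem_compl.mp hi)])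

/-- After `l` Grover iterations starting from the uniform superposition `s`, the state is
`sin((2l+1)θ) • ã + cos((2l+1)θ) • t`. -/
theorem grover_iterations
    (n : ℕ) (hn : 1 ≤ n) (A : Finset (Fin n)) (k : ℕ) (hk : k = A.card)
    (hk0 : 0 < k) (hkn : k < n)
    (θ : ℝ) (hθ0 : 0 < θ) (hθ1 : θ < Real.pi / 2)
    (hsinθ : Real.sin θ = Real.sqrt ((k : ℝ) / (n : ℝ)))
    (s a t : EuclideanSpace ℂ (Fin n))
    (hs : s = ((Real.sqrt (n : ℝ) : ℝ) : ℂ)⁻¹ •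
      ∑ i : Fin n, EuclideanSpace.single i (1 : ℂ))
    (ha : a = ((Real.sqrt (k : ℝ) : ℝ) : ℂ)⁻¹ •
      ∑ i ∈ A, EuclideanSpace.single i (1 : ℂ))
    (ht : t = ((Real.sqrt ((n : ℝ) - (k : ℝ)) : ℝ) : ℂ)⁻¹ •
      ∑ i ∈ Aᶜ, EuclideanSpace.single i (1 : ℂ))
    (UA US : Module.End ℂ (EuclideanSpace ℂ (Fin n)))
    (hUA : ∀ i : Fin n, UA (EuclideanSpace.single i (1 : ℂ)) =
      if i ∈ A then -(EuclideanSpace.single i (1 : ℂ)) else EuclideanSpace.single i (1 : ℂ))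
    (hUS : ∀ v : EuclideanSpace ℂ (Fin n), US v = (2 * (inner ℂ s v : ℂ)) • s - v) :
    ∀ l : ℕ,
      ((US * UA) ^ l) s =
        ((Real.sin ((2 * (l : ℝ) + 1) * θ) : ℝ) : ℂ) • a +
          ((Real.cos ((2 * (l : ℝ) + 1) * θ) : ℝ) : ℂ) • t :=
  grover_iterations_general n A k hk hkn θ hθ0 hθ1 hsinθ s a t hs ha ht UA US hUA hUS
end

section
/- Let θ be a real number with 0 < θ ≤ π/2 and let r = ⌊π/(4θ)⌋ (the floor, a natural number). Then cos((2r+1)θ)² ≤ sin(θ)². -/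
/-!
The odd multiple `(2r+1)θ` lies within `θ` of `π/2`, so `cos((2r+1)θ) = sin(π/2 - (2r+1)θ)` is the
sine of an angle no larger in absolute value than `θ ≤ π/2`, and `|sin|` increases with `|·|` on
`[-π/2, π/2]`.
-/

open Real

lemma abs_sub_two_mul_floor_add_one_mul_le {y h : ℝ} (hy : 0 ≤ y) (hh : 0 < h) :
    |y - (2 * ⌊y / (2 * h)⌋₊ + 1) * h| ≤ h := by
  have h2h : 0 < 2 * h := by positivity
  have hle : 2 * h * ⌊y / (2 * h)⌋₊ ≤ y :=
    (le_div_iff₀' h2h).mp (Nat.floor_le (div_nonneg hy h2h.le))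
  have hlt : y < 2 * h * (⌊y / (2 * h)⌋₊ + 1) :=
    (div_lt_iff₀' h2h).mp (Nat.lt_floor_add_one _)
  rw [abs_le]
  constructor <;> linarith

lemma sin_sq_le_sin_sq_of_abs_le {x y : ℝ} (hxy : |x| ≤ y) (hy : y ≤ π / 2) :
    sin x ^ 2 ≤ sin y ^ 2 := by
  have hy0 : 0 ≤ y := (abs_nonneg x).trans hxy
  rw [sq_le_sq, abs_sin_eq_sin_abs_of_abs_le_pi (by linarith [pi_pos]),
    abs_of_nonneg (sin_nonneg_of_nonneg_of_le_pi hy0 (by linarith [pi_pos]))]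
  exact sin_le_sin_of_le_of_le_pi_div_two (by linarith [abs_nonneg x]) hy hxy

/-- Boyer–Brassard–Høyer–Tapp choice of Grover iteration number: with
`r = ⌊π/(4θ)⌋` iterations, `cos((2r+1)θ)² ≤ sin(θ)²`. -/
theorem grover_iteration_number_bound (θ : ℝ) (hθ0 : 0 < θ) (hθ1 : θ ≤ Real.pi / 2) :
    Real.cos ((2 * (⌊Real.pi / (4 * θ)⌋₊ : ℝ) + 1) * θ) ^ 2 ≤ Real.sin θ ^ 2 := by
  have hdist := abs_sub_two_mul_floor_add_one_mul_le (y := π / 2) (by positivity) hθ0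
  rw [show π / 2 / (2 * θ) = π / (4 * θ) by ring] at hdist
  rw [← sin_pi_div_two_sub]
  exact sin_sq_le_sin_sq_of_abs_le hdist hθ1
end

section
/- For every index i ∈ Fin n, the composite map (U_x ∘ W ∘ V ∘ W ∘ U_x) sends the vector u_i := (1/√2)(e_{(i,false,false)} − e_{(i,false,true)}) to (−1)^{x_i ∧ y_i} · u_i, where (−1)^{x_i ∧ y_i} = −1 if x i = y i = true, and +1 otherwise. In particular, the distributed procedure in which Alice applies U_x, Bob applies W ∘ V ∘ W, and Alice applies U_x again implements the Grover oracle call U_A for the marked set A = {i : x i = true and y i = true} on states of the form |ψ⟩|0⟩|−⟩. -/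
/-!
Conjugating Bob's controlled oracle by the swap makes it a bit flip of the third register
controlled by the second, so `Ux W V W Ux` sends `e (i, false, w)` to `e (i, false, w xor (x i && y i))`.
The vector `u i` carries the eigenvector `|0⟩ - |1⟩` of that bit flip in its third register,
and the flip is kicked back as the phase `(-1)^(x i && y i)`.
-/

theorem phase_kickback {R M : Type*} [Ring R] [AddCommGroup M] [Module R M]
    (T : M →ₗ[R] M) (f : Bool → M) (c : Bool) (hT : ∀ w, T (f w) = f (Bool.xor w c)) :
    T (f false - f true) = (if c then (-1 : R) else 1) • (f false - f true) := by
  rw [map_sub, hT, hT]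
  cases c <;> simp

section

variable {n : ℕ} {x y : Fin n → Bool} {e : Fin n × Bool × Bool → (Fin n × Bool × Bool → ℂ)}
  {Ux W V : ((Fin n × Bool × Bool) → ℂ) →ₗ[ℂ] ((Fin n × Bool × Bool) → ℂ)}

theorem oracle_composite_apply_basis
    (hUx : ∀ (i : Fin n) (z w : Bool), Ux (e (i, z, w)) = e (i, Bool.xor z (x i), w))
    (hW : ∀ (i : Fin n) (z w : Bool), W (e (i, z, w)) = e (i, w, z))
    (hV : ∀ (i : Fin n) (z w : Bool), V (e (i, z, w)) = e (i, Bool.xor z (w && y i), w))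
    (i : Fin n) (z w : Bool) :
    (Ux ∘ₗ W ∘ₗ V ∘ₗ W ∘ₗ Ux) (e (i, z, w)) =
      e (i, z, Bool.xor w (Bool.xor z (x i) && y i)) := by
  simp only [LinearMap.comp_apply, hUx, hW, hV, Bool.xor_assoc, Bool.xor_self, Bool.xor_false]

end

theorem distributed_oracle_call_general
    (n : ℕ) (x y : Fin n → Bool)
    (e : Fin n × Bool × Bool → (Fin n × Bool × Bool → ℂ))
    (Ux W V : ((Fin n × Bool × Bool) → ℂ) →ₗ[ℂ] ((Fin n × Bool × Bool) → ℂ))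
    (hUx : ∀ (i : Fin n) (z w : Bool), Ux (e (i, z, w)) = e (i, Bool.xor z (x i), w))
    (hW : ∀ (i : Fin n) (z w : Bool), W (e (i, z, w)) = e (i, w, z))
    (hV : ∀ (i : Fin n) (z w : Bool), V (e (i, z, w)) = e (i, Bool.xor z (w && y i), w))
    (u : Fin n → ((Fin n × Bool × Bool) → ℂ))
    (hu : ∀ i, u i = ((Real.sqrt 2 : ℝ) : ℂ)⁻¹ • (e (i, false, false) - e (i, false, true))) :
    ∀ i : Fin n,
      Ux (W (V (W (Ux (u i))))) = (if x i && y i then (-1 : ℂ) else 1) • u i := by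
  intro i
  have kickback := phase_kickback (Ux ∘ₗ W ∘ₗ V ∘ₗ W ∘ₗ Ux) (fun w => e (i, false, w))
    (x i && y i) fun w => by simpa using oracle_composite_apply_basis hUx hW hV i false w
  rw [hu, smul_comm]
  simpa only [LinearMap.comp_apply, map_smul] using congrArg (_ • ·) kickback

/-- The distributed oracle-call procedure: Alice applies `Ux`, Bob applies `W ∘ V ∘ W`,
and Alice applies `Ux` again. On the vector `u i = (1/√2)(e_{(i,false,false)} −
e_{(i,false,true)})` this composite acts as multiplication by `(−1)^{x i ∧ y i}`, i.e. by
`−1` when `x i = y i = true` and `+1` otherwise, implementing the Grover oracle call for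
the marked set `{i : x i = true ∧ y i = true}`. -/
theorem distributed_oracle_call
    (n : ℕ) (hn : 1 ≤ n) (x y : Fin n → Bool)
    (e : Fin n × Bool × Bool → (Fin n × Bool × Bool → ℂ))
    (he : ∀ p, e p = Pi.single p (1 : ℂ))
    (Ux W V : ((Fin n × Bool × Bool) → ℂ) →ₗ[ℂ] ((Fin n × Bool × Bool) → ℂ))
    (hUx : ∀ (i : Fin n) (z w : Bool), Ux (e (i, z, w)) = e (i, Bool.xor z (x i), w))
    (hW : ∀ (i : Fin n) (z w : Bool), W (e (i, z, w)) = e (i, w, z))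
    (hV : ∀ (i : Fin n) (z w : Bool), V (e (i, z, w)) = e (i, Bool.xor z (w && y i), w))
    (u : Fin n → ((Fin n × Bool × Bool) → ℂ))
    (hu : ∀ i, u i = ((Real.sqrt 2 : ℝ) : ℂ)⁻¹ • (e (i, false, false) - e (i, false, true))) :
    ∀ i : Fin n,
      Ux (W (V (W (Ux (u i))))) = (if x i && y i then (-1 : ℂ) else 1) • u i :=
  distributed_oracle_call_general n x y e Ux W V hUx hW hV u hu
end

section
/- Let r be a positive even natural number and set θ = π/(4r). Let U_v and U_0 be the real 2×2 matrices U_v = [[cos 2θ, sin 2θ], [sin 2θ, −cos 2θ]] (reflection about the vector cos θ·e_0 + sin θ·e_1) and U_0 = [[1, 0], [0, −1]] (reflection about e_0). Then (U_0 · U_v)^r applied to the vector (1, 0) equals (0, −1), and U_v^r applied to (1, 0) equals (1, 0). (This is the correctness of the r-round qubit AND protocol of Jain, Radhakrishnan and Sen: on input (1,1) each round applies U_0 U_v and the final state is −|1⟩; on input (1,0) each round applies U_v and the final state is |0⟩.) -/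
open Matrix

/-! Both `U₀` and `U_v` are reflections, so `U₀ U_v` is the rotation by `-2θ` and `U_v² = 1`.
With `θ = π/(4r)`, `r` rounds of `U₀ U_v` rotate `|0⟩` by `-π/2`, onto `-|1⟩`, while for
even `r` the `r` reflections `U_v` cancel in pairs. -/

/-- Rotation by the angle `-a` in the plane, acting on column vectors. -/
noncomputable def rotationMatrix (a : ℝ) : Matrix (Fin 2) (Fin 2) ℝ :=
  !![Real.cos a, Real.sin a; -Real.sin a, Real.cos a]

/-- Reflection about the line spanned by `cos (a/2) • e₀ + sin (a/2) • e₁`. -/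
noncomputable def reflectionMatrix (a : ℝ) : Matrix (Fin 2) (Fin 2) ℝ :=
  !![Real.cos a, Real.sin a; Real.sin a, -Real.cos a]

theorem rotationMatrix_zero : rotationMatrix 0 = 1 := by
  ext i j
  fin_cases i <;> fin_cases j <;> simp [rotationMatrix]

theorem rotationMatrix_mul (a b : ℝ) :
    rotationMatrix a * rotationMatrix b = rotationMatrix (a + b) := by
  ext i j
  fin_cases i <;> fin_cases j <;>
    simp [rotationMatrix, Matrix.mul_apply, Real.cos_add, Real.sin_add] <;> ring

theorem rotationMatrix_pow (a : ℝ) (n : ℕ) : rotationMatrix a ^ n = rotationMatrix (n * a) := by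
  induction n with
  | zero => simp [rotationMatrix_zero]
  | succ n ih => rw [pow_succ, ih, rotationMatrix_mul]; push_cast; ring_nf

theorem reflectionMatrix_mul (a b : ℝ) :
    reflectionMatrix a * reflectionMatrix b = rotationMatrix (b - a) := by
  ext i j
  fin_cases i <;> fin_cases j <;>
    simp [reflectionMatrix, rotationMatrix, Matrix.mul_apply, Real.cos_sub, Real.sin_sub] <;> ring

theorem reflectionMatrix_mul_self (a : ℝ) : reflectionMatrix a * reflectionMatrix a = 1 := by
  rw [reflectionMatrix_mul, sub_self, rotationMatrix_zero]

theorem reflectionMatrix_pow_of_even (a : ℝ) {n : ℕ} (hn : Even n) :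
    reflectionMatrix a ^ n = 1 := by
  obtain ⟨k, rfl⟩ := hn
  rw [← two_mul, pow_mul, sq, reflectionMatrix_mul_self, one_pow]

theorem rotationMatrix_pi_div_two_mulVec :
    rotationMatrix (Real.pi / 2) *ᵥ ![1, 0] = ![0, -1] := by
  ext i
  fin_cases i <;> simp [rotationMatrix]

/-- Correctness of the `r`-round qubit AND protocol of Jain, Radhakrishnan and Sen: with
`θ = π/(4r)`, `U_v` the reflection about `cos θ·e₀ + sin θ·e₁` and `U₀` the reflection
about `e₀`, on input `(1,1)` the state after `r` rounds is `(U₀·U_v)^r (1,0) = (0,−1)`,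
and on input `(1,0)` it is `U_v^r (1,0) = (1,0)` (for `r` even). -/
theorem qubit_AND_protocol_correctness
    (r : ℕ) (hr : 0 < r) (hre : Even r) (θ : ℝ) (hθ : θ = Real.pi / (4 * (r : ℝ)))
    (Uv U0 : Matrix (Fin 2) (Fin 2) ℝ)
    (hUv : Uv = !![Real.cos (2 * θ), Real.sin (2 * θ);
                   Real.sin (2 * θ), -Real.cos (2 * θ)])
    (hU0 : U0 = !![1, 0; 0, -1]) :
    ((U0 * Uv) ^ r) *ᵥ ![1, 0] = ![0, -1] ∧ (Uv ^ r) *ᵥ ![1, 0] = ![1, 0] := by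
  have hUv' : Uv = reflectionMatrix (2 * θ) := hUv
  have hU0' : U0 = reflectionMatrix 0 := by simp [hU0, reflectionMatrix]
  have hangle : (r : ℝ) * (2 * θ - 0) = Real.pi / 2 := by
    rw [hθ]
    field_simp [(Nat.cast_pos.mpr hr).ne']
    ring
  constructor
  · rw [hU0', hUv', reflectionMatrix_mul, rotationMatrix_pow, hangle,
      rotationMatrix_pi_div_two_mulVec]
  · rw [hUv', reflectionMatrix_pow_of_even _ hre, one_mulVec]
end

section
/- Let m be a natural number and F : Fin m → ℝ with 0 ≤ F i ≤ 1 for all i. Then h((1 − ∏_i F i)/2) ≤ ∑_i h((1 − F i)/2). -/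
/-! Put `p = (1 - a) / 2` and `q = (1 - b) / 2`. Then `(1 - a * b) / 2` is the binary convolution
`p ⋆ q = p * (1 - q) + (1 - p) * q`, so by induction on the number of factors it suffices that
`h (p ⋆ q) ≤ h p + h q`. Since `h (1 - x) = h x` and `(1 - p) ⋆ q = 1 - p ⋆ q`, we may take
`p, q ≤ 1/2`. If `p + q ≤ 1/2`, then `p ⋆ q ≤ p + q`, and `h` is increasing on `[0, 1/2]` and,
being concave with `h 0 = 0`, subadditive. Otherwise `h (p ⋆ q) ≤ log 2 ≤ 2 log 2 (p + q)`,
and concavity puts `h` above its chord `2 log 2 · x` on `[0, 1/2]`. -/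

open Real

lemma ConcaveOn.div_mul_le_apply {s : Set ℝ} {f : ℝ → ℝ} (hf : ConcaveOn ℝ s f) (h0 : 0 ∈ s)
    (hf0 : 0 ≤ f 0) {x c : ℝ} (hc : c ∈ s) (hx : 0 ≤ x) (hxc : x ≤ c) : x / c * f c ≤ f x := by
  rcases hx.eq_or_lt with rfl | hx'
  · simpa using hf0
  have hc' : 0 < c := hx'.trans_le hxc
  have hw : 0 ≤ 1 - x / c := by rw [sub_nonneg, div_le_one hc']; exact hxc
  have hconc := hf.2 h0 hc hw (div_nonneg hx hc'.le) (by ring)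
  simp only [smul_eq_mul, mul_zero, zero_add, div_mul_cancel₀ x hc'.ne'] at hconc
  nlinarith [mul_nonneg hw hf0]

lemma ConcaveOn.map_add_le {s : Set ℝ} {f : ℝ → ℝ} (hf : ConcaveOn ℝ s f) (h0 : 0 ∈ s)
    (hf0 : 0 ≤ f 0) {x y : ℝ} (hx : 0 ≤ x) (hy : 0 ≤ y) (hxy : x + y ∈ s) :
    f (x + y) ≤ f x + f y := by
  rcases (add_nonneg hx hy).eq_or_lt with hsum | hsum
  · obtain ⟨rfl, rfl⟩ : x = 0 ∧ y = 0 := ⟨by linarith, by linarith⟩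
    simpa using hf0
  calc f (x + y) = x / (x + y) * f (x + y) + y / (x + y) * f (x + y) := by
        rw [← add_mul, ← add_div, div_self hsum.ne', one_mul]
    _ ≤ f x + f y := add_le_add (hf.div_mul_le_apply h0 hf0 hxy hx (by linarith))
        (hf.div_mul_le_apply h0 hf0 hxy hy (by linarith))

lemma Real.binEntropy_add_le {p q : ℝ} (hp : 0 ≤ p) (hq : 0 ≤ q) (hpq : p + q ≤ 1) :
    binEntropy (p + q) ≤ binEntropy p + binEntropy q :=
  strictConcave_binEntropy.concaveOn.map_add_le ⟨le_rfl, zero_le_one⟩ binEntropy_zero.ge hp hq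
    ⟨add_nonneg hp hq, hpq⟩

lemma Real.two_mul_log_two_mul_le_binEntropy {p : ℝ} (hp : 0 ≤ p) (hp2 : p ≤ 2⁻¹) :
    2 * log 2 * p ≤ binEntropy p := by
  have := strictConcave_binEntropy.concaveOn.div_mul_le_apply ⟨le_rfl, zero_le_one⟩
    binEntropy_zero.ge ⟨by norm_num, by norm_num⟩ hp hp2
  rw [binEntropy_two_inv] at this
  calc 2 * log 2 * p = p / 2⁻¹ * log 2 := by ring
    _ ≤ binEntropy p := this

def binConv (p q : ℝ) : ℝ := p * (1 - q) + (1 - p) * q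

lemma binConv_one_sub_left (p q : ℝ) : binConv (1 - p) q = 1 - binConv p q := by
  unfold binConv; ring

lemma binConv_one_sub_right (p q : ℝ) : binConv p (1 - q) = 1 - binConv p q := by
  unfold binConv; ring

lemma binEntropy_binConv_le_of_le_half {p q : ℝ} (hp : 0 ≤ p) (hp2 : p ≤ 2⁻¹) (hq : 0 ≤ q)
    (hq2 : q ≤ 2⁻¹) : binEntropy (binConv p q) ≤ binEntropy p + binEntropy q := by
  have hconv : binConv p q = p + q - 2 * p * q := by unfold binConv; ring
  rw [hconv]
  rcases le_total (p + q) 2⁻¹ with hsum | hsum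
  · calc binEntropy (p + q - 2 * p * q) ≤ binEntropy (p + q) :=
          binEntropy_strictMonoOn.monotoneOn ⟨by nlinarith, by nlinarith⟩
            ⟨add_nonneg hp hq, hsum⟩ (by nlinarith)
      _ ≤ binEntropy p + binEntropy q := binEntropy_add_le hp hq (by linarith)
  · have hlog : 0 < log 2 := log_pos one_lt_two
    calc binEntropy (p + q - 2 * p * q) ≤ log 2 := binEntropy_le_log_two
      _ ≤ 2 * log 2 * p + 2 * log 2 * q := by nlinarith
      _ ≤ binEntropy p + binEntropy q := add_le_add
          (two_mul_log_two_mul_le_binEntropy hp hp2) (two_mul_log_two_mul_le_binEntropy hq hq2)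

lemma binEntropy_binConv_le_of_le_half_left {p q : ℝ} (hp : 0 ≤ p) (hp2 : p ≤ 2⁻¹)
    (hq : 0 ≤ q) (hq1 : q ≤ 1) :
    binEntropy (binConv p q) ≤ binEntropy p + binEntropy q := by
  rcases le_total q 2⁻¹ with hq2 | hq2
  · exact binEntropy_binConv_le_of_le_half hp hp2 hq hq2
  · simpa [binConv_one_sub_right] using
      binEntropy_binConv_le_of_le_half hp hp2 (q := 1 - q) (by linarith) (by linarith)

lemma binEntropy_binConv_le {p q : ℝ} (hp : 0 ≤ p) (hp1 : p ≤ 1) (hq : 0 ≤ q) (hq1 : q ≤ 1) :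
    binEntropy (binConv p q) ≤ binEntropy p + binEntropy q := by
  rcases le_total p 2⁻¹ with hp2 | hp2
  · exact binEntropy_binConv_le_of_le_half_left hp hp2 hq hq1
  · simpa [binConv_one_sub_left] using
      binEntropy_binConv_le_of_le_half_left (p := 1 - p) (by linarith) (by linarith) hq hq1

lemma binEntropy_mul_overlap_le {a b : ℝ} (ha : |a| ≤ 1) (hb : |b| ≤ 1) :
    binEntropy ((1 - a * b) / 2) ≤ binEntropy ((1 - a) / 2) + binEntropy ((1 - b) / 2) := by
  rw [abs_le] at ha hb
  have hconv : binConv ((1 - a) / 2) ((1 - b) / 2) = (1 - a * b) / 2 := by unfold binConv; ring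
  rw [← hconv]
  exact binEntropy_binConv_le (by linarith) (by linarith) (by linarith) (by linarith)

lemma binEntropy_prod_overlap_le_sum_of_abs_le {ι : Type*} (s : Finset ι) {F : ι → ℝ}
    (hF : ∀ i ∈ s, |F i| ≤ 1) :
    binEntropy ((1 - ∏ i ∈ s, F i) / 2) ≤ ∑ i ∈ s, binEntropy ((1 - F i) / 2) := by
  classical
  induction s using Finset.induction_on with
  | empty => simp
  | insert j s hj ih =>
    rw [Finset.prod_insert hj, Finset.sum_insert hj]
    have hF' : ∀ i ∈ s, |F i| ≤ 1 := fun i hi => hF i (Finset.mem_insert_of_mem hi)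
    have hprod : |∏ i ∈ s, F i| ≤ 1 := by
      rw [Finset.abs_prod]
      exact Finset.prod_le_one (fun i _ => abs_nonneg _) hF'
    calc binEntropy ((1 - F j * ∏ i ∈ s, F i) / 2)
        ≤ binEntropy ((1 - F j) / 2) + binEntropy ((1 - ∏ i ∈ s, F i) / 2) :=
          binEntropy_mul_overlap_le (hF j (Finset.mem_insert_self j s)) hprod
      _ ≤ binEntropy ((1 - F j) / 2) + ∑ i ∈ s, binEntropy ((1 - F i) / 2) := by
          gcongr; exact ih hF'

/-- Subadditivity of the binary entropy of overlaps: for overlaps `F i ∈ [0,1]`,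
`h((1 − ∏ᵢ Fᵢ)/2) ≤ ∑ᵢ h((1 − Fᵢ)/2)` where `h` is the binary entropy function. -/
theorem binEntropy_prod_overlap_le_sum
    (m : ℕ) (F : Fin m → ℝ) (hF0 : ∀ i, 0 ≤ F i) (hF1 : ∀ i, F i ≤ 1) :
    Real.binEntropy ((1 - ∏ i, F i) / 2) ≤ ∑ i, Real.binEntropy ((1 - F i) / 2) :=
  binEntropy_prod_overlap_le_sum_of_abs_le Finset.univ fun i _ =>
    abs_le.mpr ⟨by linarith [hF0 i], hF1 i⟩
end

section
/- For all real numbers p and F with 0 ≤ p ≤ 1 and 0 ≤ F ≤ 1, h(1/2 − (1/2)·√(1 − 4p(1−p)(1−F²))) ≤ h((1 − F)/2). -/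
/-!
The mixture has eigenvalues `(1 ± s)/2` with `s = √(1 - t(1 - F²))`, `t = 4p(1-p) ∈ [0, 1]`.
The radicand is a convex combination of `1` and `F²`, so `F ≤ s ≤ 1`; since `h` is increasing
on `[0, 1/2]`, moving the smaller eigenvalue `(1 - s)/2` up to `(1 - F)/2` increases the entropy.
-/

namespace Real

lemma binEntropy_one_sub_div_two_le {a b : ℝ} (ha : 0 ≤ a) (hab : a ≤ b) (hb : b ≤ 1) :
    binEntropy ((1 - b) / 2) ≤ binEntropy ((1 - a) / 2) :=
  binEntropy_strictMonoOn.monotoneOn ⟨by linarith, by linarith⟩ ⟨by linarith, by linarith⟩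
    (by linarith)

end Real

lemma four_mul_mul_one_sub_le_one (p : ℝ) : 4 * p * (1 - p) ≤ 1 := by
  nlinarith [sq_nonneg (2 * p - 1)]

lemma sqrt_one_sub_mul_one_sub_sq_mem_Icc {t F : ℝ} (ht0 : 0 ≤ t) (ht1 : t ≤ 1)
    (hF : F ^ 2 ≤ 1) : √(1 - t * (1 - F ^ 2)) ∈ Set.Icc F 1 := by
  have hconvex : 1 - t * (1 - F ^ 2) = (1 - t) * 1 + t * F ^ 2 := by ring
  refine ⟨Real.le_sqrt_of_sq_le ?_, Real.sqrt_le_one.mpr ?_⟩ <;> nlinarith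

/-- The entropy of a mixture with weights `p, 1−p` of two pure states with overlap `F` is
maximized at `p = 1/2`: `h(1/2 − (1/2)√(1 − 4p(1−p)(1−F²))) ≤ h((1 − F)/2)`. -/
theorem binEntropy_mixture_le
    (p F : ℝ) (hp0 : 0 ≤ p) (hp1 : p ≤ 1) (hF0 : 0 ≤ F) (hF1 : F ≤ 1) :
    Real.binEntropy (1 / 2 - 1 / 2 * Real.sqrt (1 - 4 * p * (1 - p) * (1 - F ^ 2))) ≤
      Real.binEntropy ((1 - F) / 2) := by
  obtain ⟨hF_le, hs_le⟩ := sqrt_one_sub_mul_one_sub_sq_mem_Icc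
    (mul_nonneg (mul_nonneg zero_le_four hp0) (sub_nonneg.mpr hp1))
    (four_mul_mul_one_sub_le_one p) (by nlinarith : F ^ 2 ≤ 1)
  rw [show (1 : ℝ) / 2 - 1 / 2 * √(1 - 4 * p * (1 - p) * (1 - F ^ 2))
      = (1 - √(1 - 4 * p * (1 - p) * (1 - F ^ 2))) / 2 by ring]
  exact Real.binEntropy_one_sub_div_two_le hF0 hF_le hs_le
end

section
/- Assume additionally that ∑_d q d ≥ 1/n. Then the conditional expectation of the number of intersections given that subsampling found none is small: ∑_{d=0}^{n} d · q d ≤ (∑_{d=0}^{n} q d) · (2n·ln n / s + 2). -/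
/-!
Put `D = 2 n log n / s`. For `d ≤ D` trivially `d·q d ≤ D·q d`. For `d > D` the bound
`(1 - d/n)^s ≤ exp (-s d / n) < n⁻²` gives `d·q d ≤ n·q d ≤ p d / n`. Summing over `d`, the second
kind of term contributes at most `∑ p d / n = 1/n ≤ ∑ q d`.
-/

open Real Finset

lemma one_sub_rpow_le_exp_neg_mul {x s : ℝ} (hx : x ≤ 1) (hs : 0 ≤ s) :
    (1 - x) ^ s ≤ exp (-(s * x)) := by
  calc (1 - x) ^ s ≤ exp (-x) ^ s :=
        rpow_le_rpow (by linarith) (by linarith [add_one_le_exp (-x)]) hs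
    _ = exp (-(s * x)) := by rw [← exp_mul]; ring_nf

lemma one_sub_div_rpow_le_inv_sq {n d s : ℝ} (hn : 0 < n) (hd : d ≤ n) (hs : 0 ≤ s)
    (h : 2 * n * log n < s * d) : (1 - d / n) ^ s ≤ (n ^ 2)⁻¹ := by
  have hdn : d / n ≤ 1 := (div_le_one hn).mpr hd
  have hexp : 2 * log n < s * (d / n) := by
    rw [← mul_div_assoc, lt_div_iff₀ hn]; linarith
  calc (1 - d / n) ^ s ≤ exp (-(s * (d / n))) := one_sub_rpow_le_exp_neg_mul hdn hs
    _ ≤ exp (-log (n ^ 2)) := by rw [log_pow]; push_cast; exact exp_le_exp.mpr (by linarith)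
    _ = (n ^ 2)⁻¹ := by rw [exp_neg, exp_log (by positivity)]

lemma mul_le_of_le_mul_one_sub_div_rpow {n d s p q : ℝ} (hn : 1 ≤ n) (hd : d ≤ n) (hs : 0 < s)
    (hp : 0 ≤ p) (hq0 : 0 ≤ q) (hq : q ≤ p * (1 - d / n) ^ s) :
    d * q ≤ 2 * n * log n / s * q + p / n := by
  have hn0 : 0 < n := by linarith
  have hD : 0 ≤ 2 * n * log n / s := by have := log_nonneg hn; positivity
  rcases le_or_gt d (2 * n * log n / s) with hsmall | hlarge
  · have : 0 ≤ p / n := by positivity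
    nlinarith
  · have hq' : q ≤ p * (n ^ 2)⁻¹ :=
      hq.trans <| mul_le_mul_of_nonneg_left
        (one_sub_div_rpow_le_inv_sq hn0 hd hs.le (by rw [div_lt_iff₀ hs] at hlarge; linarith)) hp
    calc d * q ≤ n * (p * (n ^ 2)⁻¹) := mul_le_mul hd hq' hq0 hn0.le
      _ = p / n := by field_simp
      _ ≤ 2 * n * log n / s * q + p / n := by nlinarith

theorem subsample_conditional_expectation_bound_general
    (n : ℕ) (hn : 4 ≤ n) (s : ℝ) (hs1 : 8 * Real.log n ≤ s)
    (p q : ℕ → ℝ)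
    (hp0 : ∀ d ∈ Finset.range (n + 1), 0 ≤ p d)
    (hp1 : ∑ d ∈ Finset.range (n + 1), p d = 1)
    (hq0 : ∀ d ∈ Finset.range (n + 1), 0 ≤ q d)
    (hq1 : ∀ d ∈ Finset.range (n + 1), q d ≤ p d * (1 - (d : ℝ) / n) ^ s)
    (hq : (1 : ℝ) / n ≤ ∑ d ∈ Finset.range (n + 1), q d) :
    ∑ d ∈ Finset.range (n + 1), (d : ℝ) * q d ≤
      (∑ d ∈ Finset.range (n + 1), q d) * (2 * n * Real.log n / s + 2) := by
  have hn1 : (1 : ℝ) < n := by exact_mod_cast (by omega : 1 < n)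
  have hs : 0 < s := by linarith [log_pos hn1]
  calc ∑ d ∈ range (n + 1), (d : ℝ) * q d
      ≤ ∑ d ∈ range (n + 1), (2 * n * log n / s * q d + p d / n) := by
        refine sum_le_sum fun d hd => mul_le_of_le_mul_one_sub_div_rpow hn1.le ?_ hs
          (hp0 d hd) (hq0 d hd) (hq1 d hd)
        exact_mod_cast Nat.lt_succ_iff.mp (mem_range.mp hd)
    _ = 2 * n * log n / s * ∑ d ∈ range (n + 1), q d + 1 / n := by
        rw [sum_add_distrib, ← mul_sum, ← sum_div, hp1]
    _ ≤ (∑ d ∈ range (n + 1), q d) * (2 * n * log n / s + 2) := by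
        linarith [show 0 ≤ 1 / (n : ℝ) by positivity]

/-- Subsampling bound on the conditional expected number of intersections: if no
intersection was found in a subsample of size `s` (an event of probability `∑ d, q d ≥ 1/n`),
then `∑ d, d·q d ≤ (∑ d, q d)·(2n·ln n/s + 2)`. -/
theorem subsample_conditional_expectation_bound
    (n : ℕ) (hn : 4 ≤ n) (s : ℝ) (hs1 : 8 * Real.log n ≤ s) (hs2 : s ≤ n)
    (p q : ℕ → ℝ)
    (hp0 : ∀ d ∈ Finset.range (n + 1), 0 ≤ p d)
    (hp1 : ∑ d ∈ Finset.range (n + 1), p d = 1)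
    (hq0 : ∀ d ∈ Finset.range (n + 1), 0 ≤ q d)
    (hq1 : ∀ d ∈ Finset.range (n + 1), q d ≤ p d * (1 - (d : ℝ) / n) ^ s)
    (hq : (1 : ℝ) / n ≤ ∑ d ∈ Finset.range (n + 1), q d) :
    ∑ d ∈ Finset.range (n + 1), (d : ℝ) * q d ≤
      (∑ d ∈ Finset.range (n + 1), q d) * (2 * n * Real.log n / s + 2) :=
  subsample_conditional_expectation_bound_general n hn s hs1 p q hp0 hp1 hq0 hq1 hq
end

section
/- Let μ > 0 and Δ be real numbers with Δ ≥ (e² − 1)·μ. Then for every natural number j, exp(−μ) · (e·μ/(μ + j·Δ))^(μ + j·Δ) ≤ exp(−j·Δ), where the power is the real power x^y = exp(y·ln x). -/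
/-! For `j ≥ 1` the total `s = μ + jΔ` is at least `e²μ`, so the base `eμ/s` is at most `e⁻¹`
and the value is at most `e^{-μ-s} ≤ e^{-jΔ}`; for `j = 0` both sides equal `1`. -/

open Real

namespace Real

theorem rpow_le_exp_neg_of_le_exp_neg_one {x s : ℝ} (hx₀ : 0 ≤ x) (hx : x ≤ exp (-1))
    (hs : 0 ≤ s) : x ^ s ≤ exp (-s) :=
  calc x ^ s ≤ exp (-1) ^ s := rpow_le_rpow hx₀ hx hs
    _ = exp (-s) := by rw [← exp_mul, neg_one_mul]

theorem exp_one_mul_div_le_exp_neg_one {μ s : ℝ} (hs : 0 < s) (h : exp 1 ^ 2 * μ ≤ s) :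
    exp 1 * μ / s ≤ exp (-1) := by
  rw [div_le_iff₀ hs, exp_neg, inv_mul_eq_div, le_div_iff₀ (exp_pos 1)]
  linarith

theorem exp_neg_mul_exp_one_mul_div_self_rpow {μ : ℝ} (hμ : μ ≠ 0) :
    exp (-μ) * (exp 1 * μ / μ) ^ μ = 1 := by
  rw [mul_div_assoc, div_self hμ, mul_one, exp_one_rpow, ← exp_add, neg_add_cancel, exp_zero]

end Real

/-- Bound `Pr(E₁ = j) ≤ e^{−jΔ}` in the typical-subspace analysis: once the neighborhood
width satisfies `Δ ≥ (e² − 1)·μ`, the Poisson Chernoff bound value at total photon number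
`μ + jΔ` is at most `e^{−jΔ}`. The power is the real power `x^y = exp(y·ln x)`. -/
theorem poisson_chernoff_value_le
    (μ Δ : ℝ) (hμ : 0 < μ) (hΔ : (Real.exp 1 ^ 2 - 1) * μ ≤ Δ) :
    ∀ j : ℕ,
      Real.exp (-μ) * (Real.exp 1 * μ / (μ + (j : ℝ) * Δ)) ^ (μ + (j : ℝ) * Δ) ≤
        Real.exp (-((j : ℝ) * Δ)) := by
  intro j
  rcases j.eq_zero_or_pos with rfl | hj
  · simp [exp_neg_mul_exp_one_mul_div_self_rpow hμ.ne']
  have he : 1 < exp 1 ^ 2 := one_lt_pow₀ (one_lt_exp_iff.mpr one_pos) two_ne_zero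
  have hΔ₀ : 0 ≤ Δ := le_trans (by nlinarith) hΔ
  have hj₁ : (1 : ℝ) ≤ j := by exact_mod_cast hj
  set s := μ + (j : ℝ) * Δ
  have hs : exp 1 ^ 2 * μ ≤ s := by nlinarith
  have hs₀ : 0 < s := by nlinarith
  calc exp (-μ) * (exp 1 * μ / s) ^ s ≤ exp (-μ) * exp (-s) := by
        gcongr
        exact rpow_le_exp_neg_of_le_exp_neg_one (by positivity)
          (exp_one_mul_div_le_exp_neg_one hs₀ hs) hs₀.le
    _ ≤ exp (-((j : ℝ) * Δ)) := by
        rw [← exp_add]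
        exact exp_le_exp.mpr (by linarith)
end
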